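/- Let n ≥ 1, let y₁,…,yₙ ∈ (0,1), and let λ ∈ (0,1). Then the score function ψ is strictly decreasing on (0,∞): for all 0 < θ₁ < θ₂ one has ψ(θ₂) < ψ(θ₁). Moreover ψ(θ) → +∞ as θ → 0⁺ and ψ(θ) → Σ_{i=1}^n log yᵢ < 0 as θ → ∞. -/

import Mathlib

open Real Filter

/-- The profile score function for the shape parameter `θ` of the GTLD:
`ψ(θ) = n/θ + Σᵢ log yᵢ − 2λ Σᵢ yᵢ^θ log yᵢ/(1 + λ − 2λ yᵢ^θ)`. -/
noncomputable def psi (n : ℕ) (y : Fin n → ℝ) (lam : ℝ) (θ : ℝ) : ℝ :=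
  (n : ℝ) / θ + ∑ i, Real.log (y i) -
    2 * lam * ∑ i, (y i) ^ θ * Real.log (y i) / (1 + lam - 2 * lam * (y i) ^ θ)

/-!
With `t = y^θ ∈ (0, 1]`, the correction summand is `log y · t / (1 + λ - 2λt)`. For `|λ| < 1` the
map `t ↦ t / (1 + λ - 2λt)` is increasing on `[0, 1]` (cross-multiply), and `t` decreases in `θ`
while `log y ≤ 0`, so every summand increases with `θ`; for `λ ≥ 0` the correction `-2λ Σ …` is
therefore antitone and `ψ` inherits the strict decrease of `n/θ`. The correction is continuous at
`θ = 0`, where the denominator is `1 - λ`, and vanishes as `θ → ∞` since `y^θ → 0`.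
-/

open Topology Set

noncomputable def gtldTerm (lam y θ : ℝ) : ℝ :=
  y ^ θ * log y / (1 + lam - 2 * lam * y ^ θ)

lemma psi_eq_div_add (n : ℕ) (y : Fin n → ℝ) (lam : ℝ) :
    psi n y lam = fun θ ↦ n / θ + (∑ i, log (y i) - 2 * lam * ∑ i, gtldTerm lam (y i) θ) := by
  funext θ
  simp only [psi, gtldTerm]
  ring

section

variable {lam : ℝ}

lemma one_add_sub_mul_pos (hlam₀ : -1 < lam) (hlam₁ : lam < 1) {t : ℝ} (ht₀ : 0 ≤ t)
    (ht₁ : t ≤ 1) : 0 < 1 + lam - 2 * lam * t := by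
  rcases le_total 0 lam with hlam | hlam
  · nlinarith [mul_le_mul_of_nonneg_left ht₁ hlam]
  · nlinarith [mul_nonpos_of_nonpos_of_nonneg hlam ht₀]

lemma monotoneOn_div_one_add_sub_mul (hlam₀ : -1 < lam) (hlam₁ : lam < 1) :
    MonotoneOn (fun t ↦ t / (1 + lam - 2 * lam * t)) (Icc 0 1) := by
  intro s ⟨hs₀, hs₁⟩ t ⟨ht₀, ht₁⟩ hst
  rw [div_le_div_iff₀ (one_add_sub_mul_pos hlam₀ hlam₁ hs₀ hs₁)
    (one_add_sub_mul_pos hlam₀ hlam₁ ht₀ ht₁)]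
  nlinarith

lemma gtldTerm_monotoneOn (hlam₀ : -1 < lam) (hlam₁ : lam < 1) {y : ℝ} (hy₀ : 0 < y)
    (hy₁ : y ≤ 1) : MonotoneOn (gtldTerm lam y) (Ici 0) := by
  intro a ha b hb hab
  have hpow_mem : ∀ θ ∈ Ici (0 : ℝ), y ^ θ ∈ Icc (0 : ℝ) 1 := fun θ hθ ↦
    ⟨(rpow_pos_of_pos hy₀ θ).le, rpow_le_one hy₀.le hy₁ hθ⟩
  have hpow : y ^ b ≤ y ^ a := rpow_le_rpow_of_exponent_ge hy₀ hy₁ hab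
  simp only [gtldTerm, mul_div_right_comm _ (log y)]
  exact mul_le_mul_of_nonpos_right
    (monotoneOn_div_one_add_sub_mul hlam₀ hlam₁ (hpow_mem b hb) (hpow_mem a ha) hpow)
    (log_nonpos hy₀.le hy₁)

lemma continuousAt_gtldTerm {y θ : ℝ} (hy : y ≠ 0) (hden : 1 + lam - 2 * lam * y ^ θ ≠ 0) :
    ContinuousAt (gtldTerm lam y) θ := by
  unfold gtldTerm
  fun_prop (disch := assumption)

lemma tendsto_gtldTerm_atTop (hlam : 1 + lam ≠ 0) {y : ℝ} (hy₀ : -1 < y) (hy₁ : y < 1) :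
    Tendsto (gtldTerm lam y) atTop (𝓝 0) := by
  have hpow : Tendsto (fun θ : ℝ ↦ y ^ θ) atTop (𝓝 0) :=
    tendsto_rpow_atTop_of_base_lt_one y hy₀ hy₁
  unfold gtldTerm
  have := (hpow.mul_const (log y)).div (tendsto_const_nhds.sub (hpow.const_mul (2 * lam)))
    (by simpa using hlam)
  rwa [zero_mul, zero_div] at this

variable {n : ℕ} {y : Fin n → ℝ}

lemma psi_strictAntiOn (hn : 0 < n) (hy : ∀ i, y i ∈ Ioc 0 1) (hlam₀ : 0 ≤ lam)
    (hlam₁ : lam < 1) : StrictAntiOn (psi n y lam) (Ioi 0) := by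
  rw [psi_eq_div_add]
  have hdiv : StrictAntiOn (fun θ : ℝ ↦ n / θ) (Ioi 0) := fun a ha b _ hab ↦
    div_lt_div_of_pos_left (by exact_mod_cast hn) ha hab
  refine hdiv.add_antitone fun a ha b hb hab ↦ ?_
  have hsum : ∑ i, gtldTerm lam (y i) a ≤ ∑ i, gtldTerm lam (y i) b :=
    Finset.sum_le_sum fun i _ ↦ gtldTerm_monotoneOn (by linarith) hlam₁ (hy i).1 (hy i).2
      (mem_Ici_of_Ioi ha) (mem_Ici_of_Ioi hb) hab
  gcongr

lemma tendsto_psi_nhdsGT_zero (hn : 0 < n) (hy : ∀ i, y i ≠ 0) (hlam : lam ≠ 1) :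
    Tendsto (psi n y lam) (𝓝[>] 0) atTop := by
  rw [psi_eq_div_add]
  have hdiv : Tendsto (fun θ : ℝ ↦ n / θ) (𝓝[>] 0) atTop := by
    simpa only [div_eq_mul_inv] using
      tendsto_inv_nhdsGT_zero.const_mul_atTop (by exact_mod_cast hn : (0 : ℝ) < n)
  have hden : ∀ i, 1 + lam - 2 * lam * y i ^ (0 : ℝ) ≠ 0 := fun i ↦ by
    rw [rpow_zero]
    contrapose! hlam
    linarith
  have hrest : ContinuousAt
      (fun θ ↦ ∑ i, log (y i) - 2 * lam * ∑ i, gtldTerm lam (y i) θ) 0 :=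
    continuousAt_const.sub <| continuousAt_const.mul <|
      tendsto_finsetSum _ fun i _ ↦ continuousAt_gtldTerm (hy i) (hden i)
  exact hdiv.atTop_add (hrest.tendsto.mono_left nhdsWithin_le_nhds)

lemma tendsto_psi_atTop (hy : ∀ i, y i ∈ Ioo (-1) 1) (hlam : lam ≠ -1) :
    Tendsto (psi n y lam) atTop (𝓝 (∑ i, log (y i))) := by
  rw [psi_eq_div_add]
  have hdiv : Tendsto (fun θ : ℝ ↦ n / θ) atTop (𝓝 0) :=
    tendsto_const_nhds.div_atTop tendsto_id
  have hsum : Tendsto (fun θ ↦ ∑ i, gtldTerm lam (y i) θ) atTop (𝓝 0) := by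
    simpa using tendsto_finsetSum Finset.univ fun i _ ↦
      tendsto_gtldTerm_atTop (by contrapose! hlam; linarith) (hy i).1 (hy i).2
  simpa using hdiv.add (tendsto_const_nhds.sub (hsum.const_mul (2 * lam)))

end

/-- For `λ ∈ (0,1)` the score function `ψ` is strictly decreasing on `(0,∞)`,
tends to `+∞` as `θ → 0⁺`, and tends to `Σᵢ log yᵢ < 0` as `θ → ∞`. -/
theorem gtld_score_strict_anti (n : ℕ) (hn : 1 ≤ n) (y : Fin n → ℝ)
    (hy : ∀ i, y i ∈ Set.Ioo (0 : ℝ) 1) (lam : ℝ)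
    (hlam : lam ∈ Set.Ioo (0 : ℝ) 1) :
    (∀ θ₁ θ₂ : ℝ, 0 < θ₁ → θ₁ < θ₂ → psi n y lam θ₂ < psi n y lam θ₁) ∧
      Tendsto (psi n y lam) (nhdsWithin 0 (Set.Ioi 0)) atTop ∧
      Tendsto (psi n y lam) atTop (nhds (∑ i, Real.log (y i))) ∧
      (∑ i, Real.log (y i)) < 0 := by
  obtain ⟨hlam₀, hlam₁⟩ := hlam
  refine ⟨fun θ₁ θ₂ hθ₁ hθ ↦ ?_, ?_, ?_, ?_⟩
  · exact psi_strictAntiOn hn (fun i ↦ Ioo_subset_Ioc_self (hy i)) hlam₀.le hlam₁ hθ₁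
      (hθ₁.trans hθ) hθ
  · exact tendsto_psi_nhdsGT_zero hn (fun i ↦ (hy i).1.ne') hlam₁.ne
  · exact tendsto_psi_atTop (fun i ↦ ⟨by linarith [(hy i).1], (hy i).2⟩) (by linarith)
  · have : Nonempty (Fin n) := Fin.pos_iff_nonempty.mp hn
    exact Finset.sum_neg (fun i _ ↦ log_neg (hy i).1 (hy i).2) Finset.univ_nonempty
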